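/- In the star network setting, the MRC-variant price of buyer zero increases at rate at most one in buyer zero's bid. Precisely: the function θ ↦ p^{MRC}_{0,θ} on [0,∞) is piecewise linear (there exist finitely many points 0 = t_0 < t_1 < ⋯ < t_m such that θ ↦ p^{MRC}_{0,θ} is affine on each interval [t_i, t_{i+1}] and on [t_m, ∞)), and for all real numbers θ, θ' with 0 ≤ θ ≤ θ' one has p^{MRC}_{0,θ'} − p^{MRC}_{0,θ} ≤ θ' − θ. -/

import Mathlib

/-- The star network setting of Abhishek–Hajek. -/
structure StarSetting where
  /-- number of arms -/
  J : ℕ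
  hJ : 0 < J
  /-- number of leaf items on arm `j` -/
  n : Fin J → ℕ
  hn : ∀ j, 0 < n j
  /-- winning single-item bids -/
  b : (j : Fin J) → Fin (n j) → ℝ
  /-- losing single-item bids -/
  bl : (j : Fin J) → Fin (n j) → ℝ
  /-- losing single-item bid for item zero -/
  bl0 : ℝ
  /-- package bids -/
  C : Fin J → ℝ
  h_bid : ∀ j k, bl j k ≤ b j k
  h_pos : ∀ j, ∃ k, bl j k < b j k

namespace StarSetting

/-- Index of items (= winning buyers): `none` is item zero, `some ⟨j,k⟩` is item `(j,k)`. -/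
abbrev Idx (S : StarSetting) := Option ((j : Fin S.J) × Fin (S.n j))

variable (S : StarSetting)

noncomputable def Δ (j : Fin S.J) (k : Fin (S.n j)) : ℝ := S.b j k - S.bl j k

noncomputable def Δmax (j : Fin S.J) : ℝ :=
  Finset.univ.sup' ⟨⟨0, S.hn j⟩, Finset.mem_univ _⟩ (S.Δ j)

noncomputable def v0 : ℝ :=
  max S.bl0 (Finset.univ.sup' ⟨⟨0, S.hJ⟩, Finset.mem_univ _⟩
    fun j => S.C j - ∑ k, S.b j k)

noncomputable def η (j : Fin S.J) : ℝ := S.v0 + (∑ k, S.b j k) - S.C j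

/-- The Vikrey price vector `v_θ`. -/
noncomputable def vick (θ : ℝ) : EuclideanSpace ℝ S.Idx :=
  WithLp.toLp 2 fun (i : S.Idx) => Option.elim i S.v0 fun jk => max (S.b jk.1 jk.2 - S.η jk.1 - θ) (S.bl jk.1 jk.2)

/-- The core region `K_θ`. -/
def coreK (θ : ℝ) : Set (EuclideanSpace ℝ S.Idx) :=
  { p | (∀ j, S.C j ≤ p none + ∑ k, p (some ⟨j, k⟩)) ∧
        (∀ j k, S.bl j k ≤ p (some ⟨j, k⟩) ∧ p (some ⟨j, k⟩) ≤ S.b j k) ∧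
        S.v0 ≤ p none ∧ p none ≤ S.v0 + θ }

/-- The expanded core region (IR constraint of buyer zero dropped). -/
def expandedK : Set (EuclideanSpace ℝ S.Idx) :=
  { p | (∀ j, S.C j ≤ p none + ∑ k, p (some ⟨j, k⟩)) ∧
        (∀ j k, S.bl j k ≤ p (some ⟨j, k⟩) ∧ p (some ⟨j, k⟩) ≤ S.b j k) ∧
        S.v0 ≤ p none }

/-- The KKT conditions at `θ` for the projection onto the expanded core. -/
def KKT (θ : ℝ) (p : EuclideanSpace ℝ S.Idx) (lam : Fin S.J → ℝ) : Prop :=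
  (∀ j, 0 ≤ lam j) ∧
  p none = S.v0 + ∑ j, lam j ∧
  (∀ j k, p (some ⟨j, k⟩) = min (S.vick θ (some ⟨j, k⟩) + lam j) (S.b j k)) ∧
  (∀ j, ∑ k, max (min (S.η j + θ) (S.Δ j k) - lam j) 0 ≤ (∑ i, lam i) + S.η j) ∧
  (∀ j, 0 < lam j → (∑ i, lam i) + S.η j = ∑ k, max (min (S.η j + θ) (S.Δ j k) - lam j) 0)

/-- The seller's revenue for a winner price vector. -/
noncomputable def revenue (p : EuclideanSpace ℝ S.Idx) : ℝ :=
  p none + ∑ j, ∑ k, p (some ⟨j, k⟩)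

/-- The minimum revenue core at `θ`. -/
def MRC (θ : ℝ) : Set (EuclideanSpace ℝ S.Idx) :=
  { p | p ∈ S.coreK θ ∧ ∀ q ∈ S.coreK θ, S.revenue p ≤ S.revenue q }

end StarSetting

/-- `q` is a point of `A` nearest to `v` (Euclidean projection of `v` onto `A`). -/
def IsProjOn {E : Type*} [NormedAddCommGroup E] (A : Set E) (v q : E) : Prop :=
  q ∈ A ∧ ∀ r ∈ A, dist v q ≤ dist v r

/-- `f` is piecewise linear on `[0, ∞)`: there are finitely many breakpoints
`0 = t 0 < t 1 < ⋯ < t m` such that `f` is affine on each `[t i, t (i+1)]` and on `[t m, ∞)`. -/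
def PiecewiseLinearOnIci (f : ℝ → ℝ) : Prop :=
  ∃ m : ℕ, ∃ t : Fin (m + 1) → ℝ, t 0 = 0 ∧ StrictMono t ∧
    (∀ i : Fin m, ∃ a c : ℝ, ∀ x ∈ Set.Icc (t i.castSucc) (t i.succ), f x = a * x + c) ∧
    (∃ a c : ℝ, ∀ x ∈ Set.Ici (t (Fin.last m)), f x = a * x + c)

/-!
Write a price vector through `x = p₀ - v₀ ∈ [0, θ]` and the surpluses
`y_{jk} = b_{jk} - p_{jk} ∈ [0, Δ_{jk}]`. The core constraint of arm `j` reads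
`∑ₖ y_{jk} ≤ η_j + x` and the revenue is `v₀ + ∑ b + x - ∑ y`, so a minimum-revenue point
saturates every arm at `armCap j x = min (η_j + x) (∑ₖ Δ_{jk})` and minimises the convex function
`x - ∑_j armCap j x`, whose slope is `1 - #{j | x < kink j}`. Its minimisers on `[0, θ]` form the
interval `[min secondKink θ, min topKink θ]`.

Projecting the Vickrey point onto the MRC fills each arm by water-filling,
`y_{jk} = max (g_{jk} - λ_j) 0` below the Vickrey surpluses `g_{jk}` (`vickSurplus`), with water
level `λ_j` (`level`). On the interval of minimisers only the top arm moves, and stationarity in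
`x` (namely `λ = x` on the top arm) clamps `x` to the balance point of that arm. Hence the price
offset `x` (`offset θ`) is a max-min of affine functions of `θ`, which is piecewise linear, and
each ingredient grows by at most `θ' - θ`.
-/
open Finset
open scoped InnerProductSpace
open Set (Icc Ioo Ici uIcc mem_uIcc)

def lineVal (l : ℝ × ℝ) (x : ℝ) : ℝ := l.1 * x + l.2

def NoCrossingOn (p q : ℝ) (l l' : ℝ × ℝ) : Prop := ∀ z ∈ Ioo p q, lineVal l z ≠ lineVal l' z

lemma lineVal_le_or_le_of_noCrossingOn {p q : ℝ} {l l' : ℝ × ℝ} (h : NoCrossingOn p q l l') :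
    (∀ x ∈ Icc p q, lineVal l x ≤ lineVal l' x) ∨ (∀ x ∈ Icc p q, lineVal l' x ≤ lineVal l x) := by
  by_contra! hcon
  obtain ⟨⟨x₁, hx₁, h₁⟩, ⟨x₂, hx₂, h₂⟩⟩ := hcon
  set d : ℝ → ℝ := fun x => lineVal l x - lineVal l' x
  have hd : ContinuousOn d (uIcc x₁ x₂) := by unfold d lineVal; fun_prop
  obtain ⟨z, hz, hdz⟩ : (0 : ℝ) ∈ d '' uIcc x₁ x₂ :=
    intermediate_value_uIcc hd
      (mem_uIcc.mpr (Or.inr ⟨by simp [d]; linarith, by simp [d]; linarith⟩))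
  have hz₁ : z ≠ x₁ := by rintro rfl; simp [d] at hdz; linarith
  have hz₂ : z ≠ x₂ := by rintro rfl; simp [d] at hdz; linarith
  refine h z ⟨?_, ?_⟩ (sub_eq_zero.mp hdz)
  · rcases mem_uIcc.mp hz with hz | hz
    · exact lt_of_le_of_lt hx₁.1 (lt_of_le_of_ne hz.1 hz₁.symm)
    · exact lt_of_le_of_lt hx₂.1 (lt_of_le_of_ne hz.1 hz₂.symm)
  · rcases mem_uIcc.mp hz with hz | hz
    · exact lt_of_lt_of_le (lt_of_le_of_ne hz.2 hz₂) hx₂.2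
    · exact lt_of_lt_of_le (lt_of_le_of_ne hz.2 hz₁) hx₁.2

inductive MaxMinAffine : (ℝ → ℝ) → Prop
  | affine (a c : ℝ) : MaxMinAffine fun x => a * x + c
  | add {f g : ℝ → ℝ} : MaxMinAffine f → MaxMinAffine g → MaxMinAffine fun x => f x + g x
  | max {f g : ℝ → ℝ} : MaxMinAffine f → MaxMinAffine g → MaxMinAffine fun x => max (f x) (g x)
  | min {f g : ℝ → ℝ} : MaxMinAffine f → MaxMinAffine g → MaxMinAffine fun x => min (f x) (g x)

namespace MaxMinAffine

lemma exists_eq_lineVal_of_noCrossing {f : ℝ → ℝ} (hf : MaxMinAffine f) :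
    ∃ L : Finset (ℝ × ℝ), ∀ p q, (L : Set (ℝ × ℝ)).Pairwise (NoCrossingOn p q) →
      ∃ l ∈ L, ∀ x ∈ Icc p q, f x = lineVal l x := by
  have ordered : ∀ {L : Finset (ℝ × ℝ)} {p q}, (L : Set (ℝ × ℝ)).Pairwise (NoCrossingOn p q) →
      ∀ l ∈ L, ∀ l' ∈ L, (∀ x ∈ Icc p q, lineVal l x ≤ lineVal l' x) ∨
        (∀ x ∈ Icc p q, lineVal l' x ≤ lineVal l x) := by
    intro L p q hL l hl l' hl'
    obtain rfl | hne := eq_or_ne l l'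
    · exact Or.inl fun _ _ => le_rfl
    · exact lineVal_le_or_le_of_noCrossingOn (hL hl hl' hne)
  induction hf with
  | affine a c => exact ⟨{(a, c)}, fun _ _ _ => ⟨(a, c), mem_singleton_self _, fun _ _ => rfl⟩⟩
  | @add f g _ _ ihf ihg =>
    obtain ⟨Lf, hLf⟩ := ihf
    obtain ⟨Lg, hLg⟩ := ihg
    refine ⟨Lf ∪ Lg ∪ (Lf ×ˢ Lg).image fun ll => ll.1 + ll.2, fun p q hL => ?_⟩
    obtain ⟨l₁, hl₁, h₁⟩ := hLf p q (hL.mono (by intro; simp; tauto))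
    obtain ⟨l₂, hl₂, h₂⟩ := hLg p q (hL.mono (by intro; simp; tauto))
    refine ⟨l₁ + l₂, mem_union_right _ (mem_image.mpr ⟨(l₁, l₂), mem_product.mpr ⟨hl₁, hl₂⟩, rfl⟩),
      fun x hx => ?_⟩
    simp only [h₁ x hx, h₂ x hx, lineVal, Prod.fst_add, Prod.snd_add]
    ring
  | @max f g _ _ ihf ihg =>
    obtain ⟨Lf, hLf⟩ := ihf
    obtain ⟨Lg, hLg⟩ := ihg
    refine ⟨Lf ∪ Lg, fun p q hL => ?_⟩
    obtain ⟨l₁, hl₁, h₁⟩ := hLf p q (hL.mono (by simp))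
    obtain ⟨l₂, hl₂, h₂⟩ := hLg p q (hL.mono (by simp))
    rcases ordered hL l₁ (mem_union_left _ hl₁) l₂ (mem_union_right _ hl₂) with hle | hle
    · refine ⟨l₂, mem_union_right _ hl₂, fun x hx => ?_⟩
      simp only [h₁ x hx, h₂ x hx, max_eq_right (hle x hx)]
    · refine ⟨l₁, mem_union_left _ hl₁, fun x hx => ?_⟩
      simp only [h₁ x hx, h₂ x hx, max_eq_left (hle x hx)]
  | @min f g _ _ ihf ihg =>
    obtain ⟨Lf, hLf⟩ := ihf
    obtain ⟨Lg, hLg⟩ := ihg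
    refine ⟨Lf ∪ Lg, fun p q hL => ?_⟩
    obtain ⟨l₁, hl₁, h₁⟩ := hLf p q (hL.mono (by simp))
    obtain ⟨l₂, hl₂, h₂⟩ := hLg p q (hL.mono (by simp))
    rcases ordered hL l₁ (mem_union_left _ hl₁) l₂ (mem_union_right _ hl₂) with hle | hle
    · refine ⟨l₁, mem_union_left _ hl₁, fun x hx => ?_⟩
      simp only [h₁ x hx, h₂ x hx, min_eq_left (hle x hx)]
    · refine ⟨l₂, mem_union_right _ hl₂, fun x hx => ?_⟩
      simp only [h₁ x hx, h₂ x hx, min_eq_right (hle x hx)]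

lemma const (c : ℝ) : MaxMinAffine fun _ => c := by simpa using affine 0 c

lemma id : MaxMinAffine fun x => x := by simpa using affine 1 0

lemma const_mul {f : ℝ → ℝ} (hf : MaxMinAffine f) {c : ℝ} (hc : 0 ≤ c) :
    MaxMinAffine fun x => c * f x := by
  induction hf with
  | affine a b => simpa only [mul_add, mul_assoc] using affine (c * a) (c * b)
  | add _ _ ihf ihg => simpa only [mul_add] using ihf.add ihg
  | max _ _ ihf ihg => simpa only [mul_max_of_nonneg _ _ hc] using ihf.max ihg
  | min _ _ ihf ihg => simpa only [mul_min_of_nonneg _ _ hc] using ihf.min ihg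

lemma sum {ι : Type*} (s : Finset ι) {F : ι → ℝ → ℝ} (hF : ∀ i ∈ s, MaxMinAffine (F i)) :
    MaxMinAffine fun x => ∑ i ∈ s, F i x := by
  classical
  induction s using Finset.induction_on with
  | empty => simpa using const 0
  | insert i s hi ih =>
    simpa only [sum_insert hi] using
      (hF i (mem_insert_self i s)).add (ih fun j hj => hF j (mem_insert_of_mem hj))

lemma sup' {ι : Type*} {s : Finset ι} (hs : s.Nonempty) {F : ι → ℝ → ℝ}
    (hF : ∀ i ∈ s, MaxMinAffine (F i)) : MaxMinAffine fun x => s.sup' hs fun i => F i x := by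
  induction hs using Finset.Nonempty.cons_induction with
  | singleton i => simpa using hF i (mem_singleton_self i)
  | cons i s hi hs ih =>
    simpa only [sup'_cons hs] using
      (hF i (mem_cons_self i s)).max (ih fun j hj => hF j (mem_cons_of_mem hj))

lemma exists_breakpoints {f : ℝ → ℝ} (hf : MaxMinAffine f) :
    ∃ T : Finset ℝ, 0 ∈ T ∧ (∀ z ∈ T, 0 ≤ z) ∧ ∀ p q : ℝ, 0 ≤ p → (∀ z ∈ T, z ∉ Ioo p q) →
      ∃ a c, ∀ x ∈ Icc p q, f x = a * x + c := by
  obtain ⟨L, hL⟩ := hf.exists_eq_lineVal_of_noCrossing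
  let crossing : (ℝ × ℝ) × (ℝ × ℝ) → ℝ := fun ll => (ll.2.2 - ll.1.2) / (ll.1.1 - ll.2.1)
  refine ⟨insert 0 (((L ×ˢ L).image crossing).filter (0 ≤ ·)), mem_insert_self _ _,
    fun z hz => ?_, fun p q hp hgap => ?_⟩
  · rcases mem_insert.mp hz with rfl | hz
    exacts [le_rfl, (mem_filter.mp hz).2]
  have hpair : (L : Set (ℝ × ℝ)).Pairwise (NoCrossingOn p q) := by
    intro l hl l' hl' hne z hz hzeq
    unfold lineVal at hzeq
    have hslope : l.1 - l'.1 ≠ 0 := fun h =>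
      hne (Prod.ext (sub_eq_zero.mp h) (by rw [sub_eq_zero.mp h] at hzeq; linarith))
    refine hgap z (mem_insert_of_mem (mem_filter.mpr ⟨mem_image.mpr
      ⟨(l, l'), mem_product.mpr ⟨hl, hl'⟩, ?_⟩, hp.trans hz.1.le⟩)) hz
    rw [div_eq_iff hslope]
    linarith
  obtain ⟨l, -, hl⟩ := hL p q hpair
  exact ⟨l.1, l.2, hl⟩

end MaxMinAffine

lemma piecewiseLinearOnIci_of_affine_between (T : Finset ℝ) (hT0 : 0 ∈ T) (hT : ∀ z ∈ T, 0 ≤ z)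
    {f : ℝ → ℝ} (hf : ∀ p q : ℝ, 0 ≤ p → (∀ z ∈ T, z ∉ Ioo p q) →
      ∃ a c, ∀ x ∈ Icc p q, f x = a * x + c) :
    PiecewiseLinearOnIci f := by
  obtain ⟨m, hm⟩ : ∃ m, #T = m + 1 := Nat.exists_eq_add_one.mpr (card_pos.mpr ⟨0, hT0⟩)
  set t := T.orderEmbOfFin hm
  have ht_mem : ∀ z ∈ T, ∃ i, t i = z := fun z hz => by
    rw [← Set.mem_range, range_orderEmbOfFin]
    exact hz
  have ht_nonneg : ∀ i, 0 ≤ t i := fun i => hT _ (orderEmbOfFin_mem _ _ _)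
  have ht0 : t 0 = 0 :=
    (orderEmbOfFin_zero hm m.succ_pos).trans (le_antisymm (min'_le _ _ hT0) (le_min' _ _ _ hT))
  refine ⟨m, t, ht0, t.strictMono, fun i => hf _ _ (ht_nonneg _) ?_, ?_⟩
  · rintro z hz ⟨h₁, h₂⟩
    obtain ⟨j, rfl⟩ := ht_mem z hz
    have h₁ := t.lt_iff_lt.mp h₁
    have h₂ := t.lt_iff_lt.mp h₂
    simp only [Fin.lt_def, Fin.val_castSucc, Fin.val_succ] at h₁ h₂
    omega
  · set p := t (Fin.last m)
    have gap : ∀ q, ∀ z ∈ T, z ∉ Ioo p q := by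
      rintro q z hz ⟨h, -⟩
      obtain ⟨j, rfl⟩ := ht_mem z hz
      exact (t.monotone (Fin.le_last j)).not_gt h
    obtain ⟨a, c, hac⟩ := hf p (p + 1) (ht_nonneg _) (gap _)
    refine ⟨a, c, fun x hx => ?_⟩
    obtain ⟨a', c', hac'⟩ := hf p (max x (p + 1)) (ht_nonneg _) (gap _)
    have hq : p + 1 ≤ max x (p + 1) := le_max_right _ _
    have e₀ := (hac p ⟨le_rfl, by linarith⟩).symm.trans (hac' p ⟨le_rfl, by linarith⟩)
    have e₁ := (hac (p + 1) ⟨by linarith, le_rfl⟩).symm.trans (hac' (p + 1) ⟨by linarith, hq⟩)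
    have ha : a = a' := by linarith
    subst ha
    rw [hac' x ⟨hx, le_max_left _ _⟩]
    linarith

lemma MaxMinAffine.piecewiseLinearOnIci {f : ℝ → ℝ} (hf : MaxMinAffine f) :
    PiecewiseLinearOnIci f :=
  let ⟨T, hT0, hT, hfT⟩ := hf.exists_breakpoints
  piecewiseLinearOnIci_of_affine_between T hT0 hT hfT

lemma PiecewiseLinearOnIci.congr {f g : ℝ → ℝ} (hg : PiecewiseLinearOnIci g)
    (h : Set.EqOn f g (Ici 0)) : PiecewiseLinearOnIci f := by
  obtain ⟨m, t, ht0, ht, hpieces, a, c, htail⟩ := hg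
  have ht_nonneg : ∀ i, 0 ≤ t i := fun i => ht0 ▸ ht.monotone (Fin.zero_le i)
  refine ⟨m, t, ht0, ht, fun i => ?_, a, c, fun x hx => ?_⟩
  · obtain ⟨a, c, hac⟩ := hpieces i
    exact ⟨a, c, fun x hx => (h (ht_nonneg _ |>.trans hx.1)).trans (hac x hx)⟩
  · exact (h ((ht_nonneg _).trans hx)).trans (htail x hx)

lemma min_sum_le_sum_min {ι : Type*} (s : Finset ι) {a : ℝ} (ha : 0 ≤ a) {f : ι → ℝ}
    (hf : ∀ i ∈ s, 0 ≤ f i) : min a (∑ i ∈ s, f i) ≤ ∑ i ∈ s, min a (f i) :=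
  le_sum_of_subadditive_on_pred (min a) (0 ≤ ·) (min_le_right _ _)
    (fun x y hx hy => by
      rcases le_total a x with h | h
      · rw [min_eq_left h]; linarith [min_le_left a (x + y), le_min ha hy]
      · rcases le_total a y with h' | h'
        · rw [min_eq_left h']; linarith [min_le_left a (x + y), le_min ha hx]
        · rw [min_eq_right h, min_eq_right h']; exact min_le_right _ _)
    (fun _ _ hx hy => add_nonneg hx hy) f hf

lemma sub_max_sub_mul_le (g l : ℝ) {w : ℝ} (hw : 0 ≤ w) :
    (g - max (g - l) 0) * (w - max (g - l) 0) ≤ l * (w - max (g - l) 0) := by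
  rcases le_total l g with h | h
  · rw [max_eq_left (by linarith)]
    exact le_of_eq (by ring)
  · rw [max_eq_right (by linarith)]
    simpa using mul_le_mul_of_nonneg_right h hw

section WaterFilling

variable {ι : Type*} [Fintype ι]

noncomputable def excess (g : ι → ℝ) (l : ℝ) : ℝ := ∑ k, max (g k - l) 0

noncomputable def waterLevel (g : ι → ℝ) (s : ℝ) : ℝ := sInf {l | 0 ≤ l ∧ excess g l ≤ s}

/-- The solution `x` of `excess g x = e + x` (see `excess_balanceLevel`), written as a maximum
over subsets so that it is visibly a max-min-affine function of `g`. -/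
noncomputable def balanceLevel (g : ι → ℝ) (e : ℝ) : ℝ :=
  (univ : Finset (Finset ι)).sup' univ_nonempty fun K => (∑ k ∈ K, g k - e) / (#K + 1)

variable (g : ι → ℝ)

lemma excess_antitone : Antitone (excess g) := fun _ _ h =>
  sum_le_sum fun _ _ => max_le_max_right _ (by linarith)

lemma continuous_excess : Continuous (excess g) := by
  unfold excess; fun_prop

lemma excess_lt_excess {l l' : ℝ} (hll' : l < l') (hpos : 0 < excess g l') :
    excess g l' < excess g l := by
  obtain ⟨k, -, hk⟩ : ∃ k ∈ univ, 0 < max (g k - l') 0 := by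
    by_contra! h
    exact hpos.not_ge (sum_nonpos h)
  have hk : 0 < g k - l' := by simpa using hk
  refine sum_lt_sum (fun _ _ => max_le_max_right _ (by linarith)) ⟨k, mem_univ k, ?_⟩
  rw [max_eq_left hk.le, max_eq_left (by linarith)]
  linarith

lemma excess_zero (hg : ∀ k, 0 ≤ g k) : excess g 0 = ∑ k, g k :=
  sum_congr rfl fun k _ => by rw [sub_zero, max_eq_left (hg k)]

lemma waterLevel_set_nonempty {s : ℝ} (hs : 0 ≤ s) :
    {l | 0 ≤ l ∧ excess g l ≤ s}.Nonempty := by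
  refine ⟨∑ k, |g k|, sum_nonneg fun _ _ => abs_nonneg _, le_of_eq_of_le ?_ hs⟩
  refine sum_eq_zero fun k _ => max_eq_right (sub_nonpos.mpr ?_)
  exact (le_abs_self _).trans (single_le_sum (fun i _ => abs_nonneg (g i)) (mem_univ k))

lemma waterLevel_mem {s : ℝ} (hs : 0 ≤ s) :
    0 ≤ waterLevel g s ∧ excess g (waterLevel g s) ≤ s :=
  ((isClosed_le continuous_const continuous_id).inter
    (isClosed_le (continuous_excess g) continuous_const)).csInf_mem
    (waterLevel_set_nonempty g hs) ⟨0, fun _ hl => hl.1⟩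

lemma waterLevel_le {s l : ℝ} (hl : 0 ≤ l) (h : excess g l ≤ s) : waterLevel g s ≤ l :=
  csInf_le ⟨0, fun _ hl => hl.1⟩ ⟨hl, h⟩

lemma excess_waterLevel {s : ℝ} (hs : 0 ≤ s) (hs' : s ≤ excess g 0) :
    excess g (waterLevel g s) = s := by
  obtain ⟨hl0, hle⟩ := waterLevel_mem g hs
  refine le_antisymm hle (not_lt.mp fun hlt => ?_)
  obtain ⟨l, hl, hls⟩ :=
    intermediate_value_Icc' hl0 (continuous_excess g).continuousOn ⟨hlt.le, hs'⟩
  have hl_eq : l = waterLevel g s := le_antisymm hl.2 (waterLevel_le g hl.1 hls.le)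
  exact hlt.ne (hl_eq ▸ hls)

lemma excess_balanceLevel (e : ℝ) : excess g (balanceLevel g e) = e + balanceLevel g e := by
  classical
  set x := balanceLevel g e
  refine le_antisymm ?_ ?_
  · set K := univ.filter fun k => x < g k
    have hK : (∑ k ∈ K, g k - e) / (#K + 1) ≤ x :=
      le_sup' (fun K : Finset ι => (∑ k ∈ K, g k - e) / (#K + 1)) (mem_univ K)
    rw [div_le_iff₀ (by positivity)] at hK
    have : excess g x = ∑ k ∈ K, (g k - x) := by
      rw [excess, ← sum_filter_add_sum_filter_not univ fun k => x < g k,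
        sum_eq_zero (s := univ.filter fun k => ¬ x < g k) fun k hk => max_eq_right
          (by linarith [not_lt.mp (mem_filter.mp hk).2]), add_zero]
      exact sum_congr rfl fun k hk => max_eq_left (by linarith [(mem_filter.mp hk).2])
    rw [this, sum_sub_distrib, sum_const, nsmul_eq_mul]
    linarith
  · obtain ⟨K, -, hK⟩ := exists_mem_eq_sup' (univ_nonempty : (univ : Finset (Finset ι)).Nonempty)
      fun K => (∑ k ∈ K, g k - e) / (#K + 1)
    have hx : x * (#K + 1) = ∑ k ∈ K, g k - e := by
      rw [show x = _ from hK, div_mul_cancel₀ _ (by positivity)]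
    have : ∑ k ∈ K, (g k - x) ≤ excess g x :=
      (sum_le_sum fun k _ => le_max_left (g k - x) 0).trans
        (sum_le_sum_of_subset_of_nonneg (subset_univ K) fun _ _ _ => le_max_right _ _)
    rw [sum_sub_distrib, sum_const, nsmul_eq_mul] at this
    linarith

lemma le_waterLevel_of_le_balanceLevel {e x : ℝ} (he : 0 ≤ e) (hx : 0 ≤ x)
    (hxb : x ≤ balanceLevel g e) : x ≤ waterLevel g (e + x) := by
  obtain ⟨hl0, hle⟩ := waterLevel_mem g (add_nonneg he hx)
  by_contra! hlt
  have hex : e + x ≤ excess g x := by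
    linarith [excess_antitone g hxb, excess_balanceLevel g e]
  linarith [excess_lt_excess g hlt (by linarith)]

lemma waterLevel_le_of_balanceLevel_le {e x : ℝ} (hx : 0 ≤ x) (hxb : balanceLevel g e ≤ x) :
    waterLevel g (e + x) ≤ x :=
  waterLevel_le g hx (by linarith [excess_antitone g hxb, excess_balanceLevel g e])

lemma balanceLevel_le_add {g' : ι → ℝ} {δ : ℝ} (hδ : 0 ≤ δ) (h : ∀ k, g' k ≤ g k + δ) (e : ℝ) :
    balanceLevel g' e ≤ balanceLevel g e + δ := by
  refine sup'_le _ _ fun K _ => ?_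
  have hK : ∑ k ∈ K, g' k ≤ ∑ k ∈ K, g k + #K * δ := by
    simpa [sum_add_distrib] using sum_le_sum fun k (_ : k ∈ K) => h k
  have hle : (∑ k ∈ K, g k - e) / (#K + 1) ≤ balanceLevel g e :=
    le_sup' (fun K : Finset ι => (∑ k ∈ K, g k - e) / (#K + 1)) (mem_univ K)
  have hpos : (0 : ℝ) < #K + 1 := by positivity
  rw [div_le_iff₀ hpos] at hle ⊢
  linarith [show (balanceLevel g e + δ) * (#K + 1) = balanceLevel g e * (#K + 1) + #K * δ + δ by
    ring]

end WaterFilling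

lemma MaxMinAffine.balanceLevel {ι : Type*} [Fintype ι] {g : ℝ → ι → ℝ}
    (hg : ∀ k, MaxMinAffine fun θ => g θ k) (e : ℝ) :
    MaxMinAffine fun θ => balanceLevel (g θ) e := by
  refine MaxMinAffine.sup' _ fun K _ => ?_
  simp only [div_eq_inv_mul, sub_eq_add_neg]
  exact ((MaxMinAffine.sum K fun k _ => hg k).add (MaxMinAffine.const _)).const_mul (by positivity)

lemma eq_of_inner_sub_nonpos_of_dist_le {E : Type*} [NormedAddCommGroup E]
    [InnerProductSpace ℝ E] {v q r : E} (hinner : ⟪v - q, r - q⟫_ℝ ≤ 0)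
    (hdist : dist v r ≤ dist v q) : r = q := by
  rw [dist_eq_norm, dist_eq_norm] at hdist
  have hexp : ‖v - r‖ ^ 2 = ‖v - q‖ ^ 2 - 2 * ⟪v - q, r - q⟫_ℝ + ‖r - q‖ ^ 2 := by
    rw [← norm_sub_sq_real, sub_sub_sub_cancel_right]
  have hsq : ‖v - r‖ ^ 2 ≤ ‖v - q‖ ^ 2 := pow_le_pow_left₀ (norm_nonneg _) hdist 2
  have : ‖r - q‖ ^ 2 ≤ 0 := by linarith
  exact sub_eq_zero.mp (norm_eq_zero.mp (pow_eq_zero_iff two_ne_zero |>.mp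
    (le_antisymm this (sq_nonneg _))))

namespace StarSetting

variable (S : StarSetting)

noncomputable def totalΔ (j : Fin S.J) : ℝ := ∑ k, S.Δ j k

noncomputable def kink (j : Fin S.J) : ℝ := S.totalΔ j - S.η j

noncomputable def topArm : Fin S.J :=
  (exists_max_image univ S.kink ⟨⟨0, S.hJ⟩, mem_univ _⟩).choose

noncomputable def secondKink : ℝ :=
  (insert 0 ((univ.erase S.topArm).image S.kink)).max' (insert_nonempty _ _)

noncomputable def topKink : ℝ := max 0 (S.kink S.topArm)

noncomputable def armCap (j : Fin S.J) (x : ℝ) : ℝ := min (S.η j + x) (S.totalΔ j)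

noncomputable def reducedRevenue (x : ℝ) : ℝ := x - ∑ j, S.armCap j x

noncomputable def lowOffset (θ : ℝ) : ℝ := min S.secondKink θ

noncomputable def highOffset (θ : ℝ) : ℝ := min S.topKink θ

lemma η_nonneg (j : Fin S.J) : 0 ≤ S.η j := by
  have : S.C j - ∑ k, S.b j k ≤ S.v0 :=
    (le_sup' (fun j => S.C j - ∑ k, S.b j k) (mem_univ j)).trans (le_max_right _ _)
  unfold η
  linarith

lemma Δ_nonneg (j : Fin S.J) (k : Fin (S.n j)) : 0 ≤ S.Δ j k := sub_nonneg.mpr (S.h_bid j k)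

lemma totalΔ_nonneg (j : Fin S.J) : 0 ≤ S.totalΔ j := sum_nonneg fun k _ => S.Δ_nonneg j k

lemma kink_le_kink_topArm (j : Fin S.J) : S.kink j ≤ S.kink S.topArm :=
  (exists_max_image univ S.kink ⟨⟨0, S.hJ⟩, mem_univ _⟩).choose_spec.2 j (mem_univ j)

lemma kink_le_topKink (j : Fin S.J) : S.kink j ≤ S.topKink :=
  (S.kink_le_kink_topArm j).trans (le_max_right _ _)

lemma kink_le_secondKink {j : Fin S.J} (hj : j ≠ S.topArm) : S.kink j ≤ S.secondKink :=
  le_max' _ _ (mem_insert_of_mem (mem_image_of_mem _ (mem_erase.mpr ⟨hj, mem_univ j⟩)))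

lemma secondKink_nonneg : 0 ≤ S.secondKink := le_max' _ _ (mem_insert_self _ _)

lemma secondKink_le_topKink : S.secondKink ≤ S.topKink :=
  max'_le _ _ _ fun z hz => by
    rcases mem_insert.mp hz with rfl | hz
    · exact le_max_left _ _
    · obtain ⟨j, -, rfl⟩ := mem_image.mp hz
      exact S.kink_le_topKink j

lemma exists_ne_topArm_kink_eq (hpos : 0 < S.secondKink) :
    ∃ j ≠ S.topArm, S.kink j = S.secondKink := by
  rcases mem_insert.mp (max'_mem (insert 0 ((univ.erase S.topArm).image S.kink))
    (insert_nonempty _ _)) with h | h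
  · exact absurd h hpos.ne'
  · obtain ⟨j, hj, hjk⟩ := mem_image.mp h
    exact ⟨j, ne_of_mem_erase hj, hjk⟩

lemma armCap_mono (j : Fin S.J) : Monotone (S.armCap j) := fun _ _ h =>
  min_le_min_right _ (by linarith)

lemma armCap_nonneg (j : Fin S.J) {x : ℝ} (hx : 0 ≤ x) : 0 ≤ S.armCap j x :=
  le_min (by linarith [S.η_nonneg j]) (S.totalΔ_nonneg j)

lemma armCap_of_le_kink {j : Fin S.J} {x : ℝ} (hx : x ≤ S.kink j) : S.armCap j x = S.η j + x :=
  min_eq_left (by unfold kink at hx; linarith)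

lemma armCap_of_kink_le {j : Fin S.J} {x : ℝ} (hx : S.kink j ≤ x) : S.armCap j x = S.totalΔ j :=
  min_eq_right (by unfold kink at hx; linarith)

lemma reducedRevenue_strictAntiOn : StrictAntiOn S.reducedRevenue (Icc 0 S.secondKink) := by
  rintro z ⟨hz, -⟩ z' ⟨-, hz'⟩ hzz'
  obtain ⟨j, hj, hjk⟩ := S.exists_ne_topArm_kink_eq (hz.trans_lt (hzz'.trans_le hz'))
  have hj' : z' ≤ S.kink j := hz'.trans hjk.ge
  have htop : z' ≤ S.kink S.topArm := hj'.trans (S.kink_le_kink_topArm j)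
  have hpair : 2 * (z' - z) ≤ ∑ i ∈ {S.topArm, j}, (S.armCap i z' - S.armCap i z) := by
    rw [sum_pair hj.symm, S.armCap_of_le_kink htop, S.armCap_of_le_kink (hzz'.le.trans htop),
      S.armCap_of_le_kink hj', S.armCap_of_le_kink (hzz'.le.trans hj')]
    linarith
  have hall := sum_le_sum_of_subset_of_nonneg (subset_univ {S.topArm, j})
    fun i _ _ => sub_nonneg.mpr (S.armCap_mono i hzz'.le)
  simp only [sum_sub_distrib] at hpair hall
  unfold reducedRevenue
  linarith

lemma reducedRevenue_of_mem_Icc {x : ℝ} (hx : x ∈ Icc S.secondKink (S.kink S.topArm)) :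
    S.reducedRevenue x = -S.η S.topArm - ∑ j ∈ univ.erase S.topArm, S.totalΔ j := by
  unfold reducedRevenue
  rw [← add_sum_erase _ _ (mem_univ S.topArm), S.armCap_of_le_kink hx.2,
    sum_congr rfl fun j hj =>
      S.armCap_of_kink_le ((S.kink_le_secondKink (ne_of_mem_erase hj)).trans hx.1)]
  ring

lemma reducedRevenue_strictMonoOn : StrictMonoOn S.reducedRevenue (Ici S.topKink) := by
  intro z hz z' hz' hzz'
  have hcap : ∀ x ∈ Ici S.topKink, ∀ j, S.armCap j x = S.totalΔ j := fun x hx j =>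
    S.armCap_of_kink_le ((S.kink_le_topKink j).trans hx)
  simp only [reducedRevenue, hcap z hz, hcap z' hz']
  linarith

lemma Icc_offset_subset {θ : ℝ} (h : S.lowOffset θ < S.highOffset θ) :
    Icc (S.lowOffset θ) (S.highOffset θ) ⊆ Icc S.secondKink (S.kink S.topArm) := by
  have hlow : S.lowOffset θ = S.secondKink := by
    refine min_eq_left (not_lt.mp fun hθ => h.not_ge ?_)
    rw [lowOffset, min_eq_right hθ.le]
    exact min_le_right _ _
  have hhigh : S.highOffset θ ≤ S.kink S.topArm := by
    have hpos : 0 < S.highOffset θ := (hlow ▸ S.secondKink_nonneg).trans_lt h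
    exact (le_max_iff.mp (min_le_left _ _ : S.highOffset θ ≤ S.topKink)).resolve_left hpos.not_ge
  exact Set.Icc_subset_Icc hlow.ge hhigh

lemma reducedRevenue_eq_of_mem_Icc_offset {θ x y : ℝ}
    (hx : x ∈ Icc (S.lowOffset θ) (S.highOffset θ))
    (hy : y ∈ Icc (S.lowOffset θ) (S.highOffset θ)) :
    S.reducedRevenue x = S.reducedRevenue y := by
  rcases lt_or_ge (S.lowOffset θ) (S.highOffset θ) with h | h
  · rw [S.reducedRevenue_of_mem_Icc (S.Icc_offset_subset h hx),
      S.reducedRevenue_of_mem_Icc (S.Icc_offset_subset h hy)]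
  · rw [le_antisymm (hx.2.trans (h.trans hy.1)) (hy.2.trans (h.trans hx.1))]

lemma reducedRevenue_lt_of_notMem_Icc_offset {θ x z : ℝ}
    (hz : z ∈ Icc (S.lowOffset θ) (S.highOffset θ))
    (hx : x ∈ Icc 0 θ) (hx' : x ∉ Icc (S.lowOffset θ) (S.highOffset θ)) :
    S.reducedRevenue z < S.reducedRevenue x := by
  have hlow : S.lowOffset θ ∈ Icc (S.lowOffset θ) (S.highOffset θ) := ⟨le_rfl, hz.1.trans hz.2⟩
  have hhigh : S.highOffset θ ∈ Icc (S.lowOffset θ) (S.highOffset θ) := ⟨hz.1.trans hz.2, le_rfl⟩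
  rcases not_and_or.mp hx' with h | h
  · rw [S.reducedRevenue_eq_of_mem_Icc_offset hz hlow]
    exact S.reducedRevenue_strictAntiOn ⟨hx.1, (not_le.mp h).le.trans (min_le_left _ _)⟩
      ⟨hx.1.trans (not_le.mp h).le, min_le_left _ _⟩ (not_le.mp h)
  · have hB : S.highOffset θ = S.topKink :=
      min_eq_left (not_lt.mp fun hθ => (not_le.mp h).not_ge
        (by rw [highOffset, min_eq_right hθ.le]; exact hx.2))
    rw [S.reducedRevenue_eq_of_mem_Icc_offset hz hhigh]
    exact S.reducedRevenue_strictMonoOn hB.ge (hB ▸ (not_le.mp h).le) (not_le.mp h)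

noncomputable def vickSurplus (j : Fin S.J) (θ : ℝ) (k : Fin (S.n j)) : ℝ :=
  min (S.η j + θ) (S.Δ j k)

noncomputable def balancePoint (θ : ℝ) : ℝ :=
  balanceLevel (S.vickSurplus S.topArm θ) (S.η S.topArm)

noncomputable def offset (θ : ℝ) : ℝ :=
  max (S.lowOffset θ) (min (S.highOffset θ) (S.balancePoint θ))

noncomputable def level (θ : ℝ) (j : Fin S.J) : ℝ :=
  waterLevel (S.vickSurplus j θ) (S.armCap j (S.offset θ))

noncomputable def surplus (θ : ℝ) (j : Fin S.J) (k : Fin (S.n j)) : ℝ :=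
  max (S.vickSurplus j θ k - S.level θ j) 0

noncomputable def mrcPoint (θ : ℝ) : EuclideanSpace ℝ S.Idx :=
  WithLp.toLp 2 fun i =>
    Option.elim i (S.v0 + S.offset θ) fun jk => S.b jk.1 jk.2 - S.surplus θ jk.1 jk.2

lemma b_sub_vick (θ : ℝ) (j : Fin S.J) (k : Fin (S.n j)) :
    S.b j k - S.vick θ (some ⟨j, k⟩) = S.vickSurplus j θ k := by
  change S.b j k - max (S.b j k - S.η j - θ) (S.bl j k) = min (S.η j + θ) (S.b j k - S.bl j k)
  rcases le_total (S.b j k - S.η j - θ) (S.bl j k) with h | h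
  · rw [max_eq_right h, min_eq_right (by linarith)]
  · rw [max_eq_left h, min_eq_left (by linarith)]
    ring

lemma vickSurplus_nonneg (j : Fin S.J) {θ : ℝ} (hθ : 0 ≤ θ) (k : Fin (S.n j)) :
    0 ≤ S.vickSurplus j θ k :=
  le_min (by linarith [S.η_nonneg j]) (S.Δ_nonneg j k)

lemma vickSurplus_le_add (j : Fin S.J) {θ θ' : ℝ} (h : θ ≤ θ') (k : Fin (S.n j)) :
    S.vickSurplus j θ' k ≤ S.vickSurplus j θ k + (θ' - θ) := by
  rw [vickSurplus, vickSurplus, ← min_add_add_right]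
  exact min_le_min (by linarith) (by linarith)

lemma offset_mem (θ : ℝ) : S.offset θ ∈ Icc (S.lowOffset θ) (S.highOffset θ) :=
  ⟨le_max_left _ _, max_le (min_le_min_right _ S.secondKink_le_topKink) (min_le_left _ _)⟩

lemma offset_mem_Icc {θ : ℝ} (hθ : 0 ≤ θ) : S.offset θ ∈ Icc 0 θ :=
  ⟨(le_min S.secondKink_nonneg hθ).trans (S.offset_mem θ).1,
    (S.offset_mem θ).2.trans (min_le_right _ _)⟩

lemma offset_le_balancePoint {θ : ℝ} (h : S.lowOffset θ < S.offset θ) :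
    S.offset θ ≤ S.balancePoint θ := by
  have : S.offset θ = min (S.highOffset θ) (S.balancePoint θ) :=
    max_eq_right (not_lt.mp fun hm => h.ne' (max_eq_left hm.le))
  exact this ▸ min_le_right _ _

lemma balancePoint_le_offset {θ : ℝ} (h : S.offset θ < S.highOffset θ) :
    S.balancePoint θ ≤ S.offset θ := by
  by_contra! hb
  exact (lt_min h hb).not_ge (le_max_right _ _)

lemma reducedRevenue_offset_le {θ x : ℝ} (hx : x ∈ Icc 0 θ) :
    S.reducedRevenue (S.offset θ) ≤ S.reducedRevenue x := by
  by_cases hx' : x ∈ Icc (S.lowOffset θ) (S.highOffset θ)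
  · exact (S.reducedRevenue_eq_of_mem_Icc_offset (S.offset_mem θ) hx').le
  · exact (S.reducedRevenue_lt_of_notMem_Icc_offset (S.offset_mem θ) hx hx').le

@[simp] lemma mrcPoint_none (θ : ℝ) : S.mrcPoint θ none = S.v0 + S.offset θ := rfl

@[simp] lemma mrcPoint_some (θ : ℝ) (j : Fin S.J) (k : Fin (S.n j)) :
    S.mrcPoint θ (some ⟨j, k⟩) = S.b j k - S.surplus θ j k := rfl

lemma sum_surplus {θ : ℝ} (hθ : 0 ≤ θ) (j : Fin S.J) :
    ∑ k, S.surplus θ j k = S.armCap j (S.offset θ) := by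
  have hx := S.offset_mem_Icc hθ
  refine excess_waterLevel _ (S.armCap_nonneg j hx.1) ?_
  rw [excess_zero _ (S.vickSurplus_nonneg j hθ)]
  calc S.armCap j (S.offset θ) ≤ min (S.η j + θ) (S.totalΔ j) :=
        min_le_min_right _ (by linarith [hx.2])
    _ ≤ _ := min_sum_le_sum_min _ (by linarith [S.η_nonneg j]) fun k _ => S.Δ_nonneg j k

lemma surplus_nonneg (θ : ℝ) (j : Fin S.J) (k : Fin (S.n j)) : 0 ≤ S.surplus θ j k :=
  le_max_right _ _

lemma surplus_le_Δ {θ : ℝ} (hθ : 0 ≤ θ) (j : Fin S.J) (k : Fin (S.n j)) :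
    S.surplus θ j k ≤ S.Δ j k :=
  max_le ((sub_le_self _ (waterLevel_mem _ (S.armCap_nonneg j (S.offset_mem_Icc hθ).1)).1).trans
    (min_le_right _ _)) (S.Δ_nonneg j k)

lemma revenue_eq (r : EuclideanSpace ℝ S.Idx) :
    S.revenue r = S.v0 + ∑ j, ∑ k, S.b j k +
      ((r none - S.v0) - ∑ j, ∑ k, (S.b j k - r (some ⟨j, k⟩))) := by
  simp only [revenue, sum_sub_distrib]
  ring

lemma sum_b_sub_le_armCap {θ : ℝ} {r : EuclideanSpace ℝ S.Idx} (hr : r ∈ S.coreK θ)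
    (j : Fin S.J) : ∑ k, (S.b j k - r (some ⟨j, k⟩)) ≤ S.armCap j (r none - S.v0) := by
  obtain ⟨hC, hbox, -⟩ := hr
  refine le_min ?_ (sum_le_sum fun k _ => ?_)
  · rw [sum_sub_distrib]
    unfold η
    linarith [hC j]
  · unfold Δ
    linarith [(hbox j k).1]

lemma reducedRevenue_le_revenue {θ : ℝ} {r : EuclideanSpace ℝ S.Idx} (hr : r ∈ S.coreK θ) :
    S.v0 + ∑ j, ∑ k, S.b j k + S.reducedRevenue (r none - S.v0) ≤ S.revenue r := by
  rw [revenue_eq, reducedRevenue]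
  linarith [sum_le_sum fun j (_ : j ∈ univ) => S.sum_b_sub_le_armCap hr j]

lemma mrcPoint_mem_coreK {θ : ℝ} (hθ : 0 ≤ θ) : S.mrcPoint θ ∈ S.coreK θ := by
  have hx := S.offset_mem_Icc hθ
  refine ⟨fun j => ?_, fun j k => ⟨?_, ?_⟩, ?_, ?_⟩
  · have hcap : S.armCap j (S.offset θ) ≤ S.η j + S.offset θ := min_le_left _ _
    simp only [mrcPoint_none, mrcPoint_some, sum_sub_distrib, S.sum_surplus hθ]
    unfold η at hcap
    linarith
  · linarith [S.surplus_le_Δ hθ j k, show S.Δ j k = S.b j k - S.bl j k from rfl,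
      S.mrcPoint_some θ j k]
  · linarith [S.surplus_nonneg θ j k, S.mrcPoint_some θ j k]
  · linarith [S.mrcPoint_none θ, hx.1]
  · linarith [S.mrcPoint_none θ, hx.2]

lemma revenue_mrcPoint {θ : ℝ} (hθ : 0 ≤ θ) :
    S.revenue (S.mrcPoint θ) = S.v0 + ∑ j, ∑ k, S.b j k + S.reducedRevenue (S.offset θ) := by
  simp only [revenue_eq, reducedRevenue, mrcPoint_none, mrcPoint_some, sub_sub_cancel,
    S.sum_surplus hθ]
  ring

lemma sub_v0_mem_Icc_of_mem_coreK {θ : ℝ} {r : EuclideanSpace ℝ S.Idx} (hr : r ∈ S.coreK θ) :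
    r none - S.v0 ∈ Icc 0 θ :=
  ⟨by linarith [hr.2.2.1], by linarith [hr.2.2.2]⟩

lemma mrcPoint_mem_MRC {θ : ℝ} (hθ : 0 ≤ θ) : S.mrcPoint θ ∈ S.MRC θ :=
  ⟨S.mrcPoint_mem_coreK hθ, fun _ hr => by
    linarith [S.revenue_mrcPoint hθ, S.reducedRevenue_le_revenue hr,
      S.reducedRevenue_offset_le (S.sub_v0_mem_Icc_of_mem_coreK hr)]⟩

lemma revenue_le_of_mem_MRC {θ : ℝ} (hθ : 0 ≤ θ) {r : EuclideanSpace ℝ S.Idx}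
    (hr : r ∈ S.MRC θ) :
    S.revenue r ≤ S.v0 + ∑ j, ∑ k, S.b j k + S.reducedRevenue (S.offset θ) :=
  S.revenue_mrcPoint hθ ▸ hr.2 _ (S.mrcPoint_mem_coreK hθ)

lemma sub_v0_mem_Icc_offset_of_mem_MRC {θ : ℝ} (hθ : 0 ≤ θ) {r : EuclideanSpace ℝ S.Idx}
    (hr : r ∈ S.MRC θ) : r none - S.v0 ∈ Icc (S.lowOffset θ) (S.highOffset θ) := by
  by_contra hx
  linarith [S.revenue_le_of_mem_MRC hθ hr, S.reducedRevenue_le_revenue hr.1,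
    S.reducedRevenue_lt_of_notMem_Icc_offset (S.offset_mem θ)
      (S.sub_v0_mem_Icc_of_mem_coreK hr.1) hx]

lemma sum_b_sub_eq_armCap_of_mem_MRC {θ : ℝ} (hθ : 0 ≤ θ) {r : EuclideanSpace ℝ S.Idx}
    (hr : r ∈ S.MRC θ) (j : Fin S.J) :
    ∑ k, (S.b j k - r (some ⟨j, k⟩)) = S.armCap j (r none - S.v0) := by
  refine (sum_eq_sum_iff_of_le fun j _ => S.sum_b_sub_le_armCap hr.1 j).mp ?_ j (mem_univ j)
  have := S.revenue_le_of_mem_MRC hθ hr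
  rw [revenue_eq] at this
  linarith [S.reducedRevenue_offset_le (S.sub_v0_mem_Icc_of_mem_coreK hr.1),
    show S.reducedRevenue (r none - S.v0) =
      (r none - S.v0) - ∑ j, S.armCap j (r none - S.v0) from rfl,
    sum_le_sum fun j (_ : j ∈ univ) => S.sum_b_sub_le_armCap hr.1 j]

lemma inner_eq_sum (u w : EuclideanSpace ℝ S.Idx) :
    ⟪u, w⟫_ℝ = u none * w none + ∑ j, ∑ k, u (some ⟨j, k⟩) * w (some ⟨j, k⟩) := by
  simp [PiLp.inner_apply, Fintype.sum_option, Fintype.sum_sigma, mul_comm]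

lemma sum_level_mul_le {θ x : ℝ} (hθ : 0 ≤ θ) (hx : x ∈ Icc (S.lowOffset θ) (S.highOffset θ)) :
    ∑ j, S.level θ j * (S.armCap j x - S.armCap j (S.offset θ)) ≤
      S.offset θ * (x - S.offset θ) := by
  rcases eq_or_ne x (S.offset θ) with rfl | hne
  · simp
  have ho := S.offset_mem θ
  have hlt : S.lowOffset θ < S.highOffset θ := by
    by_contra! h
    exact hne (by linarith [hx.1, hx.2, ho.1, ho.2])
  have hxI := S.Icc_offset_subset hlt hx
  have hoI := S.Icc_offset_subset hlt ho
  rw [sum_eq_single S.topArm (fun j _ hj => by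
      rw [S.armCap_of_kink_le ((S.kink_le_secondKink hj).trans hxI.1),
        S.armCap_of_kink_le ((S.kink_le_secondKink hj).trans hoI.1), sub_self, mul_zero])
      (by simp),
    S.armCap_of_le_kink hxI.2, S.armCap_of_le_kink hoI.2, add_sub_add_left_eq_sub]
  have hlevel : S.level θ S.topArm =
      waterLevel (S.vickSurplus S.topArm θ) (S.η S.topArm + S.offset θ) := by
    rw [level, S.armCap_of_le_kink hoI.2]
  have ho₀ := (S.offset_mem_Icc hθ).1
  rcases hne.lt_or_gt with h | h
  · have := le_waterLevel_of_le_balanceLevel _ (S.η_nonneg _) ho₀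
      (S.offset_le_balancePoint (hx.1.trans_lt h))
    rw [← hlevel] at this
    nlinarith
  · have := waterLevel_le_of_balanceLevel_le _ ho₀ (S.balancePoint_le_offset (h.trans_le hx.2))
    rw [← hlevel] at this
    nlinarith

lemma inner_vick_sub_mrcPoint_nonpos {θ : ℝ} (hθ : 0 ≤ θ) {r : EuclideanSpace ℝ S.Idx}
    (hr : r ∈ S.MRC θ) : ⟪S.vick θ - S.mrcPoint θ, r - S.mrcPoint θ⟫_ℝ ≤ 0 := by
  have harm : ∀ j, ∑ k, (S.vick θ - S.mrcPoint θ) (some ⟨j, k⟩) * (r - S.mrcPoint θ) (some ⟨j, k⟩)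
      ≤ S.level θ j * (S.armCap j (r none - S.v0) - S.armCap j (S.offset θ)) := by
    intro j
    rw [← S.sum_b_sub_eq_armCap_of_mem_MRC hθ hr j, ← S.sum_surplus hθ j, ← sum_sub_distrib,
      mul_sum]
    refine sum_le_sum fun k _ => ?_
    have hv : S.vick θ (some ⟨j, k⟩) = S.b j k - S.vickSurplus j θ k := by
      linarith [S.b_sub_vick θ j k]
    have hw : 0 ≤ S.b j k - r (some ⟨j, k⟩) := sub_nonneg.mpr (hr.1.2.1 j k).2
    calc _ = (S.vickSurplus j θ k - S.surplus θ j k) *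
          ((S.b j k - r (some ⟨j, k⟩)) - S.surplus θ j k) := by
          simp only [PiLp.sub_apply, mrcPoint_some, hv]
          ring
      _ ≤ _ := sub_max_sub_mul_le _ _ hw
  have hnone : (S.vick θ - S.mrcPoint θ) none * (r - S.mrcPoint θ) none =
      -(S.offset θ * ((r none - S.v0) - S.offset θ)) := by
    simp only [PiLp.sub_apply, mrcPoint_none, show S.vick θ none = S.v0 from rfl]
    ring
  rw [inner_eq_sum, hnone]
  linarith [sum_le_sum fun j (_ : j ∈ univ) => harm j,
    S.sum_level_mul_le hθ (S.sub_v0_mem_Icc_offset_of_mem_MRC hθ hr)]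

lemma eq_mrcPoint_of_isProjOn {θ : ℝ} (hθ : 0 ≤ θ) {q : EuclideanSpace ℝ S.Idx}
    (hq : IsProjOn (S.MRC θ) (S.vick θ) q) : q = S.mrcPoint θ :=
  eq_of_inner_sub_nonpos_of_dist_le (S.inner_vick_sub_mrcPoint_nonpos hθ hq.1)
    (hq.2 _ (S.mrcPoint_mem_MRC hθ))

lemma maxMinAffine_offset : MaxMinAffine S.offset := by
  have hg : ∀ k, MaxMinAffine fun θ => S.vickSurplus S.topArm θ k := fun k =>
    (MaxMinAffine.const _ |>.add MaxMinAffine.id).min (MaxMinAffine.const _)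
  exact ((MaxMinAffine.const _).min MaxMinAffine.id).max
    (((MaxMinAffine.const _).min MaxMinAffine.id).min (MaxMinAffine.balanceLevel hg _))

lemma offset_le_add {θ θ' : ℝ} (h : θ ≤ θ') : S.offset θ' ≤ S.offset θ + (θ' - θ) := by
  have hbal : S.balancePoint θ' ≤ S.balancePoint θ + (θ' - θ) :=
    balanceLevel_le_add _ (by linarith) (S.vickSurplus_le_add S.topArm h) _
  simp only [offset, lowOffset, highOffset, ← max_add_add_right, ← min_add_add_right]
  exact max_le_max (min_le_min (by linarith) (by linarith))
    (min_le_min (min_le_min (by linarith) (by linarith)) hbal)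

end StarSetting

/-- the MRC-variant price of buyer zero, `θ ↦ p^{MRC}_{0,θ}`, is piecewise
linear on `[0,∞)` and increases at rate at most one. -/
theorem mrc_price_slope_le_one (S : StarSetting)
    (p : ℝ → EuclideanSpace ℝ S.Idx)
    (hp : ∀ θ : ℝ, 0 ≤ θ → IsProjOn (S.MRC θ) (S.vick θ) (p θ)) :
    PiecewiseLinearOnIci (fun θ => p θ none) ∧
    ∀ θ θ' : ℝ, 0 ≤ θ → θ ≤ θ' → p θ' none - p θ none ≤ θ' - θ := by
  have hprice : ∀ θ, 0 ≤ θ → p θ none = S.v0 + S.offset θ := fun θ hθ => by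
    rw [S.eq_mrcPoint_of_isProjOn hθ (hp θ hθ), S.mrcPoint_none]
  refine ⟨((MaxMinAffine.const S.v0).add S.maxMinAffine_offset).piecewiseLinearOnIci.congr
    fun θ hθ => hprice θ hθ, fun θ θ' hθ hθθ' => ?_⟩
  rw [hprice θ hθ, hprice θ' (hθ.trans hθθ')]
  linarith [S.offset_le_add hθθ']
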